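/- arXiv:2510.16807 — 2 statements merged into one kernel-verified Lean document; each statement's English description precedes it below -/
import Mathlib

section
/- There exist real scalars t₁ and t₂, not depending on the index i, such that for every 1 ≤ i ≤ d: E[X (Yᵀ)_{:,i} Y_{i,:} Xᵀ] = t₁ I_d and E[X (Yᵀ)_{:,i} (Ŵ_D)_{i,:}] = t₂ I_d. -/
/-!
The joint law of the entries of `(X, W, ε)` is invariant under
`(X, W, ε) ↦ (G X, P W Gᵀ, P ε)` for every permutation matrix `P = P_ρ` and signed
permutation matrix `G = diag(s) P_τ`, since this only permutes independent centred Gaussian coordinates and flips some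
signs. As `Gᵀ G = 1`, it sends `Y ↦ P Y`, `Y Xᵀ ↦ P Y Xᵀ Gᵀ` and `Ŵ ↦ P Ŵ Gᵀ`. Hence both
families of second-moment matrices satisfy `M i k l = s k * s l * M (ρ i) (τ k) (τ l)`:
flipping the sign of column `k` kills the off-diagonal entries, and transpositions make all
diagonal entries of all `M i` equal.
-/

open MeasureTheory ProbabilityTheory Matrix Equiv

noncomputable section

section SignedPermMatrix

variable {l m n : Type*} [Fintype m] [DecidableEq m]

def signedPermMatrix (τ : Perm m) (s : m → ℝ) : Matrix m m ℝ := diagonal s * τ.permMatrix ℝ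

variable (τ : Perm m) (s : m → ℝ)

lemma signedPermMatrix_mul_apply (A : Matrix m n ℝ) (r : m) (a : n) :
    (signedPermMatrix τ s * A) r a = s r * A (τ r) a := by
  rw [signedPermMatrix, Matrix.mul_assoc, PEquiv.toMatrix_toPEquiv_mul, diagonal_mul]
  rfl

lemma mul_signedPermMatrix_transpose_apply (A : Matrix l m ℝ) (i : l) (k : m) :
    (A * (signedPermMatrix τ s)ᵀ) i k = s k * A i (τ k) := by
  rw [← transpose_apply (A * _), transpose_mul, transpose_transpose,
    signedPermMatrix_mul_apply, transpose_apply]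

variable {s} in
lemma signedPermMatrix_transpose_mul_self (hs : ∀ k, s k ^ 2 = 1) :
    (signedPermMatrix τ s)ᵀ * signedPermMatrix τ s = 1 := by
  have hss : diagonal s * diagonal s = 1 := by
    rw [diagonal_mul_diagonal, ← diagonal_one]
    exact congrArg diagonal (funext fun k => by rw [← sq, hs k])
  rw [signedPermMatrix, transpose_mul, diagonal_transpose, Matrix.mul_assoc,
    ← Matrix.mul_assoc (diagonal s), hss, Matrix.one_mul, transpose_permMatrix,
    ← permMatrix_mul, mul_inv_cancel, permMatrix_one]

end SignedPermMatrix

lemma exists_eq_smul_one_of_signedPerm_invariant {ι m : Type*} [Nonempty ι] [Nonempty m]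
    [DecidableEq ι] [DecidableEq m] (M : ι → Matrix m m ℝ)
    (hM : ∀ (ρ : Perm ι) (τ : Perm m) (s : m → ℝ), (∀ k, s k ^ 2 = 1) →
      ∀ i k l, M i k l = s k * s l * M (ρ i) (τ k) (τ l)) :
    ∃ t : ℝ, ∀ i, M i = t • 1 := by
  obtain ⟨i₀⟩ := ‹Nonempty ι›
  obtain ⟨k₀⟩ := ‹Nonempty m›
  refine ⟨M i₀ k₀ k₀, fun i => ext fun k l => ?_⟩
  rw [Matrix.smul_apply, one_apply, smul_eq_mul]
  split_ifs with hkl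
  · subst hkl
    simpa using hM (swap i i₀) (swap k k₀) 1 (fun _ => one_pow 2) i k k
  · have hflip := hM 1 1 (fun r => if r = k then -1 else 1)
      (fun r => by split_ifs <;> norm_num) i k l
    simp only [Perm.coe_one, id_eq, if_pos, if_neg (Ne.symm hkl), neg_one_mul,
      mul_one] at hflip
    linarith

section Ridge

variable {R l l' m n : Type*} [CommRing R] [Fintype l] [Fintype m] [DecidableEq m] [Fintype n]

def ridge (c : R) (X : Matrix m n R) (Y : Matrix l n R) : Matrix l m R :=
  Y * Xᵀ * (X * Xᵀ + c • 1)⁻¹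

lemma ridge_orthogonal_mul (c : R) {G : Matrix m m R} (hG : Gᵀ * G = 1)
    (P : Matrix l' l R) (X : Matrix m n R) (Y : Matrix l n R) :
    ridge c (G * X) (P * Y) = P * ridge c X Y * Gᵀ := by
  have hG' : G * Gᵀ = 1 := mul_eq_one_comm.mp hG
  have hgram : G * X * (G * X)ᵀ + c • 1 = G * (X * Xᵀ + c • 1) * Gᵀ := by
    rw [Matrix.mul_add, Matrix.add_mul, Matrix.mul_smul, Matrix.smul_mul, Matrix.mul_one, hG',
      transpose_mul, Matrix.mul_assoc, Matrix.mul_assoc, Matrix.mul_assoc]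
  rw [ridge, ridge, hgram, Matrix.mul_inv_rev, Matrix.mul_inv_rev, inv_eq_left_inv hG',
    inv_eq_left_inv hG, transpose_mul]
  simp only [Matrix.mul_assoc]
  rw [← Matrix.mul_assoc Gᵀ G, hG, Matrix.one_mul]

end Ridge

lemma measurable_mul_inv_apply {S l m : Type*} [TopologicalSpace S] [MeasurableSpace S]
    [OpensMeasurableSpace S] [Fintype m] [DecidableEq m] {B : S → Matrix l m ℝ}
    {A : S → Matrix m m ℝ} (hB : Continuous B) (hA : Continuous A) (i : l) (j : m) :
    Measurable fun x => (B x * (A x)⁻¹) i j := by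
  have h x : (B x * (A x)⁻¹) i j = (A x).det⁻¹ * (B x * (A x).adjugate) i j := by
    rw [Matrix.inv_def, Matrix.mul_smul, Matrix.smul_apply, Ring.inverse_eq_inv', smul_eq_mul]
  simp only [h]
  exact (measurable_inv.comp hA.matrix_det.measurable).mul
    ((hB.matrix_mul hA.matrix_adjugate).matrix_elem i j).measurable

lemma measurePreserving_signedPerm {ι : Type*} [Fintype ι] {μs : ι → Measure ℝ}
    [∀ j, SigmaFinite (μs j)] (e : Perm ι) (he : ∀ j, μs (e j) = μs j) (s : ι → ℝ)
    (hs : ∀ j, (μs j).map (s j * ·) = μs j) :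
    MeasurePreserving (fun x j => s j * x (e j)) (Measure.pi μs) (Measure.pi μs) := by
  have hperm := measurePreserving_piCongrLeft μs e.symm
  rw [show (fun j => μs (e.symm j)) = μs from funext fun j => by
    rw [← he, apply_symm_apply]] at hperm
  have hcoe : ⇑(MeasurableEquiv.piCongrLeft (fun _ => ℝ) e.symm) = fun x j => x (e j) := by
    ext x j
    simp [MeasurableEquiv.coe_piCongrLeft, Equiv.piCongrLeft_apply]
  rw [hcoe] at hperm
  exact (measurePreserving_pi μs μs fun j => ⟨measurable_const_mul _, hs j⟩).comp hperm

lemma gaussianReal_map_const_mul_of_sq_eq_one {c : ℝ} (hc : c ^ 2 = 1) (v : NNReal) :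
    (gaussianReal 0 v).map (c * ·) = gaussianReal 0 v := by
  rw [gaussianReal_map_const_mul, mul_zero]
  congr
  ext
  simp [hc]

lemma integral_mul_apply_eq_of_measurePreserving {S ι m : Type*} [MeasurableSpace S]
    [Fintype ι] [DecidableEq ι] [Fintype m] [DecidableEq m] {μ : Measure S} {T : S → S}
    (hT : MeasurePreserving T μ μ) {F F' : S → Matrix ι m ℝ} (ρ : Perm ι) (τ : Perm m)
    (s : m → ℝ) (hF : ∀ x, F (T x) = ρ.permMatrix ℝ * F x * (signedPermMatrix τ s)ᵀ)
    (hF' : ∀ x, F' (T x) = ρ.permMatrix ℝ * F' x * (signedPermMatrix τ s)ᵀ) {i : ι} {k l : m}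
    (hmeas : Measurable fun x => F x i k * F' x i l) :
    ∫ x, F x i k * F' x i l ∂μ = s k * s l * ∫ x, F x (ρ i) (τ k) * F' x (ρ i) (τ l) ∂μ := by
  have hentry (A : Matrix ι m ℝ) (i : ι) (k : m) :
      (ρ.permMatrix ℝ * A * (signedPermMatrix τ s)ᵀ) i k = s k * A (ρ i) (τ k) := by
    rw [mul_signedPermMatrix_transpose_apply, PEquiv.toMatrix_toPEquiv_mul]
    rfl
  calc ∫ x, F x i k * F' x i l ∂μ = ∫ x, F (T x) i k * F' (T x) i l ∂μ := by
        rw [← integral_map hT.aemeasurable hmeas.aestronglyMeasurable, hT.map_eq]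
    _ = s k * s l * ∫ x, F x (ρ i) (τ k) * F' x (ρ i) (τ l) ∂μ := by
        simp only [hF, hF', hentry, ← integral_const_mul]
        congr 1 with x
        ring

lemma mulVec_apply_eq_mul_transpose_apply {m n : Type*} [Fintype n] (X Y : Matrix m n ℝ)
    (i k : m) : (X *ᵥ Y i) k = (Y * Xᵀ) i k := by
  rw [mul_apply_eq_vecMul, vecMul_transpose]

namespace RidgeModel

/-- A sample point lists the entries of `X`, `W` and `ε`, indexed as in the independent family
of the theorem. -/
abbrev Coord (d n : ℕ) := (Fin d × Fin n) ⊕ ((Fin d × Fin d) ⊕ (Fin d × Fin n))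

variable {d n : ℕ}

def designMat (x : Coord d n → ℝ) : Matrix (Fin d) (Fin n) ℝ := of fun k a => x (.inl (k, a))

def weightMat (x : Coord d n → ℝ) : Matrix (Fin d) (Fin d) ℝ :=
  of fun r c => x (.inr (.inl (r, c)))

def noiseMat (x : Coord d n → ℝ) : Matrix (Fin d) (Fin n) ℝ :=
  of fun r a => x (.inr (.inr (r, a)))

def responseMat (x : Coord d n → ℝ) : Matrix (Fin d) (Fin n) ℝ :=
  weightMat x * designMat x + noiseMat x

def crossMat (x : Coord d n → ℝ) : Matrix (Fin d) (Fin d) ℝ := responseMat x * (designMat x)ᵀ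

@[fun_prop]
lemma continuous_designMat : Continuous (designMat : (Coord d n → ℝ) → _) := by
  unfold designMat; fun_prop

@[fun_prop]
lemma continuous_weightMat : Continuous (weightMat : (Coord d n → ℝ) → _) := by
  unfold weightMat; fun_prop

@[fun_prop]
lemma continuous_noiseMat : Continuous (noiseMat : (Coord d n → ℝ) → _) := by
  unfold noiseMat; fun_prop

@[fun_prop]
lemma continuous_responseMat : Continuous (responseMat : (Coord d n → ℝ) → _) := by
  unfold responseMat; fun_prop

lemma measurable_crossMat_apply (i k : Fin d) :
    Measurable fun x : Coord d n → ℝ => crossMat x i k := by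
  unfold crossMat
  exact (Continuous.matrix_elem (by fun_prop) i k).measurable

lemma measurable_ridge_apply (c : ℝ) (i k : Fin d) :
    Measurable fun x : Coord d n → ℝ => ridge c (designMat x) (responseMat x) i k := by
  unfold ridge
  exact measurable_mul_inv_apply (by fun_prop) (by fun_prop) i k

def coordLaw (d n : ℕ) (σ : ℝ) : Coord d n → Measure ℝ :=
  Sum.elim (fun _ => gaussianReal 0 1)
    (Sum.elim (fun _ => gaussianReal 0 1) fun _ => gaussianReal 0 ⟨σ ^ 2, sq_nonneg σ⟩)

instance (σ : ℝ) (j : Coord d n) : IsProbabilityMeasure (coordLaw d n σ j) := by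
  rcases j with _ | _ | _ <;> exact instIsProbabilityMeasureGaussianReal _ _

def coordPerm (ρ τ : Perm (Fin d)) : Perm (Coord d n) :=
  sumCongr (prodCongr τ 1) (sumCongr (prodCongr ρ τ) (prodCongr ρ 1))

def coordSign (s : Fin d → ℝ) : Coord d n → ℝ :=
  Sum.elim (fun q => s q.1) (Sum.elim (fun q => s q.2) 1)

def signedPermAct (ρ τ : Perm (Fin d)) (s : Fin d → ℝ) (x : Coord d n → ℝ) : Coord d n → ℝ :=
  fun j => coordSign s j * x (coordPerm ρ τ j)

section Action

variable (ρ τ : Perm (Fin d)) {s : Fin d → ℝ}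

lemma measurePreserving_signedPermAct (σ : ℝ) (hs : ∀ k, s k ^ 2 = 1) :
    MeasurePreserving (signedPermAct ρ τ s) (Measure.pi (coordLaw d n σ))
      (Measure.pi (coordLaw d n σ)) := by
  refine measurePreserving_signedPerm _ (by rintro (_ | _ | _) <;> rfl) _ ?_
  rintro (_ | _ | _)
  · exact gaussianReal_map_const_mul_of_sq_eq_one (hs _) _
  · exact gaussianReal_map_const_mul_of_sq_eq_one (hs _) _
  · exact gaussianReal_map_const_mul_of_sq_eq_one (one_pow 2) _

lemma designMat_signedPermAct (x : Coord d n → ℝ) :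
    designMat (signedPermAct ρ τ s x) = signedPermMatrix τ s * designMat x := by
  ext r a
  rw [signedPermMatrix_mul_apply]
  rfl

lemma weightMat_signedPermAct (x : Coord d n → ℝ) :
    weightMat (signedPermAct ρ τ s x) =
      ρ.permMatrix ℝ * weightMat x * (signedPermMatrix τ s)ᵀ := by
  ext r c
  rw [mul_signedPermMatrix_transpose_apply, PEquiv.toMatrix_toPEquiv_mul]
  rfl

lemma noiseMat_signedPermAct (x : Coord d n → ℝ) :
    noiseMat (signedPermAct ρ τ s x) = ρ.permMatrix ℝ * noiseMat x := by
  ext r a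
  rw [PEquiv.toMatrix_toPEquiv_mul]
  exact one_mul _

lemma responseMat_signedPermAct (hs : ∀ k, s k ^ 2 = 1) (x : Coord d n → ℝ) :
    responseMat (signedPermAct ρ τ s x) = ρ.permMatrix ℝ * responseMat x := by
  rw [responseMat, responseMat, designMat_signedPermAct, weightMat_signedPermAct,
    noiseMat_signedPermAct, Matrix.mul_assoc, ← Matrix.mul_assoc _ (signedPermMatrix τ s),
    signedPermMatrix_transpose_mul_self τ hs, Matrix.one_mul, Matrix.mul_add,
    Matrix.mul_assoc]

lemma crossMat_signedPermAct (hs : ∀ k, s k ^ 2 = 1) (x : Coord d n → ℝ) :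
    crossMat (signedPermAct ρ τ s x) =
      ρ.permMatrix ℝ * crossMat x * (signedPermMatrix τ s)ᵀ := by
  rw [crossMat, crossMat, responseMat_signedPermAct ρ τ hs, designMat_signedPermAct,
    transpose_mul, Matrix.mul_assoc, Matrix.mul_assoc, Matrix.mul_assoc]

lemma ridge_signedPermAct (c : ℝ) (hs : ∀ k, s k ^ 2 = 1) (x : Coord d n → ℝ) :
    ridge c (designMat (signedPermAct ρ τ s x)) (responseMat (signedPermAct ρ τ s x)) =
      ρ.permMatrix ℝ * ridge c (designMat x) (responseMat x) * (signedPermMatrix τ s)ᵀ := by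
  rw [designMat_signedPermAct, responseMat_signedPermAct ρ τ hs,
    ridge_orthogonal_mul c (signedPermMatrix_transpose_mul_self τ hs)]

end Action

lemma exists_integral_mul_eq_smul_one [NeZero d] (σ : ℝ)
    {F F' : (Coord d n → ℝ) → Matrix (Fin d) (Fin d) ℝ}
    (hFm : ∀ i k, Measurable fun x => F x i k) (hF'm : ∀ i k, Measurable fun x => F' x i k)
    (hF : ∀ ρ τ s, (∀ k, s k ^ 2 = 1) → ∀ x,
      F (signedPermAct ρ τ s x) = ρ.permMatrix ℝ * F x * (signedPermMatrix τ s)ᵀ)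
    (hF' : ∀ ρ τ s, (∀ k, s k ^ 2 = 1) → ∀ x,
      F' (signedPermAct ρ τ s x) = ρ.permMatrix ℝ * F' x * (signedPermMatrix τ s)ᵀ) :
    ∃ t : ℝ, ∀ i, of (fun k l => ∫ x, F x i k * F' x i l ∂(Measure.pi (coordLaw d n σ))) =
      t • 1 :=
  exists_eq_smul_one_of_signedPerm_invariant _ fun ρ τ s hs _ _ _ =>
    integral_mul_apply_eq_of_measurePreserving (measurePreserving_signedPermAct ρ τ σ hs) ρ τ s
      (hF ρ τ s hs) (hF' ρ τ s hs) ((hFm _ _).mul (hF'm _ _))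

section Sampling

variable {Ω : Type*} [MeasurableSpace Ω] {P : Measure Ω} {X ε : Ω → Matrix (Fin d) (Fin n) ℝ}
  {W : Ω → Matrix (Fin d) (Fin d) ℝ}

def coordFamily (X : Ω → Matrix (Fin d) (Fin n) ℝ) (W : Ω → Matrix (Fin d) (Fin d) ℝ)
    (ε : Ω → Matrix (Fin d) (Fin n) ℝ) : Coord d n → Ω → ℝ :=
  Sum.elim (fun q ω => X ω q.1 q.2) (Sum.elim (fun q ω => W ω q.1 q.2) fun q ω => ε ω q.1 q.2)

lemma integral_comp_coordFamily {σ : ℝ}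
    (hmX : ∀ i j, Measurable fun ω => X ω i j) (hmW : ∀ i j, Measurable fun ω => W ω i j)
    (hmε : ∀ i j, Measurable fun ω => ε ω i j) (hindep : iIndepFun (coordFamily X W ε) P)
    (hlawX : ∀ i j, P.map (fun ω => X ω i j) = gaussianReal 0 1)
    (hlawW : ∀ i j, P.map (fun ω => W ω i j) = gaussianReal 0 1)
    (hlawε : ∀ i j, P.map (fun ω => ε ω i j) = gaussianReal 0 ⟨σ ^ 2, sq_nonneg σ⟩)
    {g : (Coord d n → ℝ) → ℝ} (hg : Measurable g) :
    ∫ ω, g (fun j => coordFamily X W ε j ω) ∂P = ∫ x, g x ∂(Measure.pi (coordLaw d n σ)) := by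
  have hm : ∀ j, Measurable (coordFamily X W ε j) := by
    rintro (⟨i, j⟩ | ⟨i, j⟩ | ⟨i, j⟩)
    exacts [hmX i j, hmW i j, hmε i j]
  have hlaw : P.map (fun ω j => coordFamily X W ε j ω) = Measure.pi (coordLaw d n σ) := by
    rw [hindep.map_fun_eq_pi_map fun j => (hm j).aemeasurable]
    congr 1
    funext j
    rcases j with ⟨i, j⟩ | ⟨i, j⟩ | ⟨i, j⟩
    exacts [hlawX i j, hlawW i j, hlawε i j]
  rw [← hlaw, integral_map (measurable_pi_lambda _ hm).aemeasurable hg.aestronglyMeasurable]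

end Sampling

end RidgeModel

open RidgeModel in
theorem stmt_4_general (d n : ℕ) (hd : 1 ≤ d) (σ : ℝ)
    (Ω : Type) [MeasureSpace Ω]
    (X : Ω → Matrix (Fin d) (Fin n) ℝ)
    (W : Ω → Matrix (Fin d) (Fin d) ℝ)
    (ε : Ω → Matrix (Fin d) (Fin n) ℝ)
    (hmX : ∀ i j, Measurable fun ω => X ω i j)
    (hmW : ∀ i j, Measurable fun ω => W ω i j)
    (hmε : ∀ i j, Measurable fun ω => ε ω i j)
    (hindep : iIndepFun
      (Sum.elim (fun q : Fin d × Fin n => fun ω => X ω q.1 q.2)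
        (Sum.elim (fun q : Fin d × Fin d => fun ω => W ω q.1 q.2)
          (fun q : Fin d × Fin n => fun ω => ε ω q.1 q.2))) ℙ)
    (hlawX : ∀ i j, Measure.map (fun ω => X ω i j) ℙ = gaussianReal 0 1)
    (hlawW : ∀ i j, Measure.map (fun ω => W ω i j) ℙ = gaussianReal 0 1)
    (hlawε : ∀ i j, Measure.map (fun ω => ε ω i j) ℙ = gaussianReal 0 ⟨σ ^ 2, sq_nonneg σ⟩)
    (Y : Ω → Matrix (Fin d) (Fin n) ℝ) (hY : ∀ ω, Y ω = W ω * X ω + ε ω)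
    (What : Ω → Matrix (Fin d) (Fin d) ℝ)
    (hWhat : ∀ ω, What ω =
      Y ω * (X ω)ᵀ * (X ω * (X ω)ᵀ + σ ^ 2 • (1 : Matrix (Fin d) (Fin d) ℝ))⁻¹)
    :
    ∃ t₁ t₂ : ℝ, ∀ i : Fin d,
      (Matrix.of fun k l => ∫ ω, (X ω *ᵥ Y ω i) k * (X ω *ᵥ Y ω i) l)
          = t₁ • (1 : Matrix (Fin d) (Fin d) ℝ) ∧
      (Matrix.of fun k l => ∫ ω, (X ω *ᵥ Y ω i) k * What ω i l)
          = t₂ • (1 : Matrix (Fin d) (Fin d) ℝ) := by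
  have : NeZero d := ⟨by omega⟩
  have transfer {g : (Coord d n → ℝ) → ℝ} (hg : Measurable g) :=
    integral_comp_coordFamily hmX hmW hmε hindep hlawX hlawW hlawε hg
  set Z : Ω → Coord d n → ℝ := fun ω j => coordFamily X W ε j ω
  have hcross ω i k : (X ω *ᵥ Y ω i) k = crossMat (Z ω) i k := by
    rw [mulVec_apply_eq_mul_transpose_apply, hY]; rfl
  have hridge ω : What ω = ridge (σ ^ 2) (designMat (Z ω)) (responseMat (Z ω)) := by
    rw [hWhat, hY]; rfl
  obtain ⟨t₁, h₁⟩ := exists_integral_mul_eq_smul_one (d := d) (n := n) σ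
    measurable_crossMat_apply measurable_crossMat_apply
    (fun ρ τ _ => crossMat_signedPermAct ρ τ) (fun ρ τ _ => crossMat_signedPermAct ρ τ)
  obtain ⟨t₂, h₂⟩ := exists_integral_mul_eq_smul_one (d := d) (n := n) σ
    measurable_crossMat_apply (measurable_ridge_apply (σ ^ 2))
    (fun ρ τ _ => crossMat_signedPermAct ρ τ) (fun ρ τ _ => ridge_signedPermAct ρ τ (σ ^ 2))
  refine ⟨t₁, t₂, fun i => ⟨?_, ?_⟩⟩
  · rw [← h₁ i]
    ext k l
    simp only [of_apply, hcross]
    exact transfer ((measurable_crossMat_apply i k).mul (measurable_crossMat_apply i l))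
  · rw [← h₂ i]
    ext k l
    simp only [of_apply, hcross, hridge]
    exact transfer ((measurable_crossMat_apply i k).mul (measurable_ridge_apply _ i l))

/-- There exist scalars `t₁, t₂`, not depending on `i`, such that
for every `i`: `E[X (Yᵀ)_{:,i} Y_{i,:} Xᵀ] = t₁ I_d` and
`E[X (Yᵀ)_{:,i} (Ŵ_D)_{i,:}] = t₂ I_d`. -/
theorem stmt_4 (d n : ℕ) (hd : 1 ≤ d) (hn : 1 ≤ n) (σ : ℝ) (hσ : 0 < σ)
    (Ω : Type) [MeasureSpace Ω] [IsProbabilityMeasure (ℙ : Measure Ω)]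
    (X : Ω → Matrix (Fin d) (Fin n) ℝ)
    (W : Ω → Matrix (Fin d) (Fin d) ℝ)
    (ε : Ω → Matrix (Fin d) (Fin n) ℝ)
    (hmX : ∀ i j, Measurable fun ω => X ω i j)
    (hmW : ∀ i j, Measurable fun ω => W ω i j)
    (hmε : ∀ i j, Measurable fun ω => ε ω i j)
    (hindep : iIndepFun
      (Sum.elim (fun q : Fin d × Fin n => fun ω => X ω q.1 q.2)
        (Sum.elim (fun q : Fin d × Fin d => fun ω => W ω q.1 q.2)
          (fun q : Fin d × Fin n => fun ω => ε ω q.1 q.2))) ℙ)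
    (hlawX : ∀ i j, Measure.map (fun ω => X ω i j) ℙ = gaussianReal 0 1)
    (hlawW : ∀ i j, Measure.map (fun ω => W ω i j) ℙ = gaussianReal 0 1)
    (hlawε : ∀ i j, Measure.map (fun ω => ε ω i j) ℙ = gaussianReal 0 ⟨σ ^ 2, sq_nonneg σ⟩)
    (Y : Ω → Matrix (Fin d) (Fin n) ℝ) (hY : ∀ ω, Y ω = W ω * X ω + ε ω)
    (What : Ω → Matrix (Fin d) (Fin d) ℝ)
    (hWhat : ∀ ω, What ω =
      Y ω * (X ω)ᵀ * (X ω * (X ω)ᵀ + σ ^ 2 • (1 : Matrix (Fin d) (Fin d) ℝ))⁻¹)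
    :
    ∃ t₁ t₂ : ℝ, ∀ i : Fin d,
      (Matrix.of fun k l => ∫ ω, (X ω *ᵥ Y ω i) k * (X ω *ᵥ Y ω i) l)
          = t₁ • (1 : Matrix (Fin d) (Fin d) ℝ) ∧
      (Matrix.of fun k l => ∫ ω, (X ω *ᵥ Y ω i) k * What ω i l)
          = t₂ • (1 : Matrix (Fin d) (Fin d) ℝ) :=
  stmt_4_general d n hd σ Ω X W ε hmX hmW hmε hindep hlawX hlawW hlawε Y hY What hWhat

end
end

section
/- Assume n > σ². Then for every 1 ≤ i ≤ d: E[(Ŵ_D)_{i,:} X (Yᵀ)_{:,i}] > 0 and E[Y_{i,:} Xᵀ X (Yᵀ)_{:,i}] > 0; consequently λ_i > 0 for all i, and Λ = diag(λ_1,…,λ_d) is invertible. -/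
open MeasureTheory ProbabilityTheory Matrix
open scoped NNReal

noncomputable section

/-! Both expectations are integrals of `u ⬝ᵥ M u` with `u = X Yᵢᵀ` and `M` positive definite
(`M = (X Xᵀ + σ² I)⁻¹`, resp. `M = I`), that is, of a nonnegative continuous function of the
independent Gaussian entries of `(X, W, ε)`. The integrand is integrable because Gaussians have
moments of all orders and `(X Xᵀ + σ² I)⁻¹ ≤ σ⁻² I`. It is positive at the all-ones configuration,
and the joint law of the entries, a product of Gaussians, charges every nonempty open set, so the
integral is positive. -/

section Moments

variable {Ω : Type*} [MeasurableSpace Ω] {μ : Measure Ω}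

def HasAllMoments (f : Ω → ℝ) (μ : Measure Ω) : Prop := ∀ p : ℝ≥0, MemLp f p μ

namespace HasAllMoments

variable {f g : Ω → ℝ}

lemma integrable (hf : HasAllMoments f μ) : Integrable f μ :=
  memLp_one_iff_integrable.mp (by exact_mod_cast hf 1)

lemma add (hf : HasAllMoments f μ) (hg : HasAllMoments g μ) :
    HasAllMoments (fun ω => f ω + g ω) μ :=
  fun p => (hf p).add (hg p)

lemma mul (hf : HasAllMoments f μ) (hg : HasAllMoments g μ) :
    HasAllMoments (fun ω => f ω * g ω) μ := by
  intro p
  have : ENNReal.HolderTriple (2 * p : ℝ≥0) (2 * p : ℝ≥0) p := ⟨by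
    push_cast
    rw [← two_mul, ENNReal.mul_inv (by simp) (by simp), ← mul_assoc,
      ENNReal.mul_inv_cancel two_ne_zero ENNReal.ofNat_ne_top, one_mul]⟩
  exact (hg (2 * p)).mul' (hf (2 * p))

lemma sum {ι : Type*} (s : Finset ι) {F : ι → Ω → ℝ} (hF : ∀ k ∈ s, HasAllMoments (F k) μ) :
    HasAllMoments (fun ω => ∑ k ∈ s, F k ω) μ :=
  fun p => memLp_finsetSum s fun k hk => hF k hk p

lemma dotProduct {m : Type*} [Fintype m] {u v : Ω → m → ℝ}
    (hu : ∀ k, HasAllMoments (fun ω => u ω k) μ) (hv : ∀ k, HasAllMoments (fun ω => v ω k) μ) :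
    HasAllMoments (fun ω => u ω ⬝ᵥ v ω) μ :=
  sum _ fun k _ => (hu k).mul (hv k)

end HasAllMoments

lemma hasAllMoments_of_map_eq_gaussianReal {f : Ω → ℝ} (hf : Measurable f) {m : ℝ} {v : ℝ≥0}
    (h : μ.map f = gaussianReal m v) : HasAllMoments f μ := fun p =>
  (memLp_map_measure_iff aestronglyMeasurable_id hf.aemeasurable).mp
    (h ▸ memLp_id_gaussianReal p)

end Moments

lemma isOpenPosMeasure_gaussianReal (m : ℝ) {v : ℝ≥0} (hv : v ≠ 0) :
    (gaussianReal m v).IsOpenPosMeasure :=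
  (gaussianReal_absolutelyContinuous' m hv).isOpenPosMeasure

lemma ProbabilityTheory.iIndepFun.isOpenPosMeasure_map {Ω ι : Type*} [MeasurableSpace Ω]
    {μ : Measure Ω} [Fintype ι] {β : ι → Type*} [∀ i, MeasurableSpace (β i)]
    [∀ i, TopologicalSpace (β i)] {f : ∀ i, Ω → β i} (hf : ∀ i, Measurable (f i))
    (hind : iIndepFun f μ) (hpos : ∀ i, (μ.map (f i)).IsOpenPosMeasure) :
    (μ.map fun ω i => f i ω).IsOpenPosMeasure := by
  have := hind.isProbabilityMeasure
  rw [hind.map_fun_eq_pi_map fun i => (hf i).aemeasurable]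
  infer_instance

lemma integral_comp_pos {Ω E : Type*} [MeasurableSpace Ω] {μ : Measure Ω} [TopologicalSpace E]
    [MeasurableSpace E] [OpensMeasurableSpace E] {Φ : Ω → E} (hΦ : Measurable Φ)
    [(μ.map Φ).IsOpenPosMeasure] {G : E → ℝ} (hG : Continuous G) (hG0 : 0 ≤ G) {p₀ : E}
    (hp₀ : G p₀ ≠ 0) (hint : Integrable (G ∘ Φ) μ) : 0 < ∫ ω, G (Φ ω) ∂μ := by
  rw [integral_pos_iff_support_of_nonneg (fun ω => hG0 (Φ ω)) hint]
  change 0 < μ (Φ ⁻¹' Function.support G)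
  rw [← Measure.map_apply hΦ hG.isOpen_support.measurableSet]
  exact hG.isOpen_support.measure_pos _ ⟨p₀, hp₀⟩

section Transpose

variable {R m n : Type*} [CommSemiring R] [Fintype m] [Fintype n]

lemma mul_transpose_mul_row_dotProduct (Y X : Matrix m n R) (B : Matrix m m R) (i : m)
    (v : m → R) : (Y * Xᵀ * B) i ⬝ᵥ v = (X *ᵥ Y i) ⬝ᵥ (B *ᵥ v) := by
  rw [mul_apply_eq_vecMul, mul_apply_eq_vecMul, vecMul_transpose, dotProduct_mulVec]

lemma dotProduct_transpose_mul_mulVec (X : Matrix m n R) (y : n → R) :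
    y ⬝ᵥ ((Xᵀ * X) *ᵥ y) = (X *ᵥ y) ⬝ᵥ (X *ᵥ y) := by
  rw [← mulVec_mulVec, dotProduct_mulVec, vecMul_transpose]

end Transpose

section Ridge

variable {m n : Type*} [Fintype m] [Fintype n] [DecidableEq m] {σ : ℝ}

lemma posDef_mul_transpose_add_smul_one (X : Matrix m n ℝ) (hσ : σ ≠ 0) :
    (X * Xᵀ + σ ^ 2 • (1 : Matrix m m ℝ)).PosDef := by
  refine PosDef.posSemidef_add ?_ ?_
  · simpa using posSemidef_self_mul_conjTranspose X
  · rw [smul_one_eq_diagonal]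
    exact PosDef.diagonal fun _ => by positivity

lemma continuous_inv_mul_transpose_add_smul_one (hσ : σ ≠ 0) :
    Continuous fun X : Matrix m n ℝ => (X * Xᵀ + σ ^ 2 • (1 : Matrix m m ℝ))⁻¹ := by
  refine continuous_iff_continuousAt.mpr fun X => ?_
  have hdet := (posDef_mul_transpose_add_smul_one X hσ).det_pos.ne'
  refine (continuousAt_matrix_inv _ ?_).comp (by fun_prop)
  rw [Ring.inverse_eq_inv']
  exact continuousAt_inv₀ hdet

lemma Matrix.PosDef.dotProduct_inv_mulVec_le {A : Matrix m m ℝ} (hA : A.PosDef) {c : ℝ}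
    (hc : 0 < c) (hAc : ∀ y, c * (y ⬝ᵥ y) ≤ y ⬝ᵥ (A *ᵥ y)) (u : m → ℝ) :
    u ⬝ᵥ (A⁻¹ *ᵥ u) ≤ c⁻¹ * (u ⬝ᵥ u) := by
  set y := A⁻¹ *ᵥ u
  have hAy : A *ᵥ y = u := by
    rw [mulVec_mulVec, mul_nonsing_inv _ (isUnit_iff_ne_zero.mpr hA.det_pos.ne'), one_mulVec]
  have hyAy : c * (y ⬝ᵥ y) ≤ u ⬝ᵥ y := by
    simpa only [← hAy, dotProduct_comm y] using hAc y
  have hCS : (u ⬝ᵥ y) ^ 2 ≤ (u ⬝ᵥ u) * (y ⬝ᵥ y) := by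
    simpa only [dotProduct, sq] using Finset.sum_mul_sq_le_sq_mul_sq Finset.univ u y
  have hyy : 0 ≤ y ⬝ᵥ y := Finset.sum_nonneg fun k _ => mul_self_nonneg _
  have huu : 0 ≤ u ⬝ᵥ u := Finset.sum_nonneg fun k _ => mul_self_nonneg _
  rw [inv_mul_eq_div, le_div_iff₀ hc]
  rcases le_or_gt (u ⬝ᵥ y) 0 with hneg | hpos
  · nlinarith
  · refine le_of_mul_le_mul_left ?_ hpos
    nlinarith [mul_le_mul_of_nonneg_left hyAy huu]

lemma dotProduct_inv_mul_transpose_add_smul_one_le (X : Matrix m n ℝ) (hσ : σ ≠ 0) (u : m → ℝ) :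
    u ⬝ᵥ ((X * Xᵀ + σ ^ 2 • (1 : Matrix m m ℝ))⁻¹ *ᵥ u) ≤ (σ ^ 2)⁻¹ * (u ⬝ᵥ u) := by
  refine (posDef_mul_transpose_add_smul_one X hσ).dotProduct_inv_mulVec_le
    (pow_two_pos_of_ne_zero hσ) (fun y => ?_) u
  have hXX : 0 ≤ y ⬝ᵥ ((X * Xᵀ) *ᵥ y) := by
    simpa using (posSemidef_self_mul_conjTranspose X).dotProduct_mulVec_nonneg y
  rw [add_mulVec, dotProduct_add, smul_mulVec, one_mulVec, dotProduct_smul, smul_eq_mul]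
  linarith

end Ridge

section Coordinates

variable {d n : ℕ}

-- The entries of `(X, W, ε)`, indexed as in the family whose independence is assumed.
abbrev LinRegIndex (d n : ℕ) := (Fin d × Fin n) ⊕ ((Fin d × Fin d) ⊕ (Fin d × Fin n))

def inputsOf (p : LinRegIndex d n → ℝ) : Matrix (Fin d) (Fin n) ℝ :=
  of fun a b => p (.inl (a, b))

def weightsOf (p : LinRegIndex d n → ℝ) : Matrix (Fin d) (Fin d) ℝ :=
  of fun a b => p (.inr (.inl (a, b)))

def noiseOf (p : LinRegIndex d n → ℝ) : Matrix (Fin d) (Fin n) ℝ :=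
  of fun a b => p (.inr (.inr (a, b)))

def outputsOf (p : LinRegIndex d n → ℝ) : Matrix (Fin d) (Fin n) ℝ :=
  weightsOf p * inputsOf p + noiseOf p

def crossCorr (i : Fin d) (p : LinRegIndex d n → ℝ) : Fin d → ℝ :=
  inputsOf p *ᵥ outputsOf p i

def linRegCoords {Ω : Type*} (X : Ω → Matrix (Fin d) (Fin n) ℝ)
    (W : Ω → Matrix (Fin d) (Fin d) ℝ) (ε : Ω → Matrix (Fin d) (Fin n) ℝ) :
    LinRegIndex d n → Ω → ℝ :=
  Sum.elim (fun q ω => X ω q.1 q.2) (Sum.elim (fun q ω => W ω q.1 q.2) (fun q ω => ε ω q.1 q.2))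

variable {Ω : Type*} {X : Ω → Matrix (Fin d) (Fin n) ℝ}
  {W : Ω → Matrix (Fin d) (Fin d) ℝ} {ε : Ω → Matrix (Fin d) (Fin n) ℝ}

lemma measurable_linRegCoords [MeasurableSpace Ω] (hmX : ∀ i j, Measurable fun ω => X ω i j)
    (hmW : ∀ i j, Measurable fun ω => W ω i j) (hmε : ∀ i j, Measurable fun ω => ε ω i j) :
    ∀ k, Measurable (linRegCoords X W ε k) := by
  rintro (⟨a, b⟩ | ⟨a, b⟩ | ⟨a, b⟩)
  exacts [hmX a b, hmW a b, hmε a b]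

lemma exists_map_linRegCoords_eq_gaussianReal [MeasurableSpace Ω] {μ : Measure Ω} {σ : ℝ}
    (hσ : σ ≠ 0) (hlawX : ∀ i j, μ.map (fun ω => X ω i j) = gaussianReal 0 1)
    (hlawW : ∀ i j, μ.map (fun ω => W ω i j) = gaussianReal 0 1)
    (hlawε : ∀ i j, μ.map (fun ω => ε ω i j) = gaussianReal 0 ⟨σ ^ 2, sq_nonneg σ⟩) :
    ∀ k, ∃ v : ℝ≥0, v ≠ 0 ∧ μ.map (linRegCoords X W ε k) = gaussianReal 0 v := by
  rintro (⟨a, b⟩ | ⟨a, b⟩ | ⟨a, b⟩)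
  · exact ⟨1, one_ne_zero, hlawX a b⟩
  · exact ⟨1, one_ne_zero, hlawW a b⟩
  · refine ⟨⟨σ ^ 2, sq_nonneg σ⟩, fun h => hσ ?_, hlawε a b⟩
    exact pow_eq_zero_iff two_ne_zero |>.mp (congrArg NNReal.toReal h)

lemma inputsOf_linRegCoords (ω : Ω) : inputsOf (fun k => linRegCoords X W ε k ω) = X ω := rfl

lemma crossCorr_linRegCoords (i : Fin d) (ω : Ω) :
    crossCorr i (fun k => linRegCoords X W ε k ω) = X ω *ᵥ (W ω * X ω + ε ω) i := rfl

lemma continuous_inputsOf : Continuous (inputsOf : (LinRegIndex d n → ℝ) → _) :=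
  continuous_matrix fun _ _ => continuous_apply _

lemma continuous_crossCorr (i : Fin d) : Continuous (crossCorr (n := n) i) := by
  have hW : Continuous (weightsOf : (LinRegIndex d n → ℝ) → _) :=
    continuous_matrix fun _ _ => continuous_apply _
  have hE : Continuous (noiseOf : (LinRegIndex d n → ℝ) → _) :=
    continuous_matrix fun _ _ => continuous_apply _
  exact continuous_inputsOf.matrix_mulVec <| continuous_pi fun j =>
    ((hW.matrix_mul continuous_inputsOf).add hE).matrix_elem i j

lemma crossCorr_one_ne_zero (hn : 0 < n) (i : Fin d) :
    crossCorr (n := n) i (fun _ => 1) ≠ 0 := by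
  intro h
  have := congrFun h i
  simp only [crossCorr, outputsOf, inputsOf, weightsOf, noiseOf, mulVec, dotProduct, of_apply,
    Matrix.add_apply, mul_apply, mul_one, Finset.sum_const, Finset.card_univ, Fintype.card_fin,
    nsmul_eq_mul, Pi.zero_apply] at this
  nlinarith [(Nat.cast_pos.mpr hn : (0 : ℝ) < n), (Nat.cast_nonneg d : (0 : ℝ) ≤ d)]

lemma hasAllMoments_crossCorr [MeasurableSpace Ω] {μ : Measure Ω}
    {F : LinRegIndex d n → Ω → ℝ} (hmom : ∀ k, HasAllMoments (F k) μ) (i k : Fin d) :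
    HasAllMoments (fun ω => crossCorr i (fun k => F k ω) k) μ :=
  HasAllMoments.dotProduct (fun j => hmom (.inl (k, j))) fun j =>
    (HasAllMoments.dotProduct (fun l => hmom (.inr (.inl (i, l)))) fun l =>
      hmom (.inl (l, j))).add (hmom (.inr (.inr (i, j))))

end Coordinates

lemma integral_crossCorr_quadForm_pos {d n : ℕ} {Ω : Type*} [MeasurableSpace Ω] {μ : Measure Ω}
    {F : LinRegIndex d n → Ω → ℝ} (hF : ∀ k, Measurable (F k)) (hind : iIndepFun F μ)
    (hpos : ∀ k, (μ.map (F k)).IsOpenPosMeasure) (hmom : ∀ k, HasAllMoments (F k) μ)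
    {M : Matrix (Fin d) (Fin n) ℝ → Matrix (Fin d) (Fin d) ℝ} (hM : Continuous M)
    (hMpos : ∀ X, (M X).PosDef) {C : ℝ} (hMC : ∀ X u, u ⬝ᵥ (M X *ᵥ u) ≤ C * (u ⬝ᵥ u))
    (hn : 0 < n) (i : Fin d) :
    0 < ∫ ω, crossCorr i (fun k => F k ω) ⬝ᵥ
      (M (inputsOf fun k => F k ω) *ᵥ crossCorr i (fun k => F k ω)) ∂μ := by
  set G : (LinRegIndex d n → ℝ) → ℝ := fun p =>
    crossCorr i p ⬝ᵥ (M (inputsOf p) *ᵥ crossCorr i p)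
  have hΦ : Measurable fun ω k => F k ω := measurable_pi_lambda _ hF
  have := hind.isOpenPosMeasure_map hF hpos
  have hG : Continuous G :=
    (continuous_crossCorr i).dotProduct ((hM.comp continuous_inputsOf).matrix_mulVec
      (continuous_crossCorr i))
  have hG0 : 0 ≤ G := fun p => (hMpos _).posSemidef.dotProduct_mulVec_nonneg _
  have hgram :
      Integrable (fun ω => crossCorr i (fun k => F k ω) ⬝ᵥ crossCorr i (fun k => F k ω)) μ :=
    (HasAllMoments.dotProduct (hasAllMoments_crossCorr hmom i)
      (hasAllMoments_crossCorr hmom i)).integrable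
  refine integral_comp_pos hΦ hG hG0 ((hMpos _).dotProduct_mulVec_pos
    (crossCorr_one_ne_zero hn i)).ne' ?_
  refine (hgram.const_mul C).mono' (hG.measurable.comp hΦ).aestronglyMeasurable
    (ae_of_all _ fun ω => ?_)
  rw [Function.comp_apply, Real.norm_eq_abs, abs_of_nonneg (hG0 _)]
  exact hMC _ _

theorem stmt_12_general (d n : ℕ) (hn : 1 ≤ n) (σ : ℝ) (hσ : 0 < σ)
    (Ω : Type) [MeasureSpace Ω] [IsProbabilityMeasure (ℙ : Measure Ω)]
    (X : Ω → Matrix (Fin d) (Fin n) ℝ)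
    (W : Ω → Matrix (Fin d) (Fin d) ℝ)
    (ε : Ω → Matrix (Fin d) (Fin n) ℝ)
    (hmX : ∀ i j, Measurable fun ω => X ω i j)
    (hmW : ∀ i j, Measurable fun ω => W ω i j)
    (hmε : ∀ i j, Measurable fun ω => ε ω i j)
    (hindep : iIndepFun
      (Sum.elim (fun q : Fin d × Fin n => fun ω => X ω q.1 q.2)
        (Sum.elim (fun q : Fin d × Fin d => fun ω => W ω q.1 q.2)
          (fun q : Fin d × Fin n => fun ω => ε ω q.1 q.2))) ℙ)
    (hlawX : ∀ i j, Measure.map (fun ω => X ω i j) ℙ = gaussianReal 0 1)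
    (hlawW : ∀ i j, Measure.map (fun ω => W ω i j) ℙ = gaussianReal 0 1)
    (hlawε : ∀ i j, Measure.map (fun ω => ε ω i j) ℙ = gaussianReal 0 ⟨σ ^ 2, sq_nonneg σ⟩)
    (Y : Ω → Matrix (Fin d) (Fin n) ℝ) (hY : ∀ ω, Y ω = W ω * X ω + ε ω)
    (What : Ω → Matrix (Fin d) (Fin d) ℝ)
    (hWhat : ∀ ω, What ω =
      Y ω * (X ω)ᵀ * (X ω * (X ω)ᵀ + σ ^ 2 • (1 : Matrix (Fin d) (Fin d) ℝ))⁻¹)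
    (lam : Fin d → ℝ)
    (hlam : ∀ i : Fin d, lam i =
      (∫ ω, What ω i ⬝ᵥ (X ω *ᵥ Y ω i)) / (∫ ω, Y ω i ⬝ᵥ (((X ω)ᵀ * X ω) *ᵥ Y ω i))) :
    (∀ i : Fin d, 0 < ∫ ω, What ω i ⬝ᵥ (X ω *ᵥ Y ω i)) ∧
    (∀ i : Fin d, 0 < ∫ ω, Y ω i ⬝ᵥ (((X ω)ᵀ * X ω) *ᵥ Y ω i)) ∧
    (∀ i : Fin d, 0 < lam i) ∧
    IsUnit (Matrix.diagonal lam) := by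
  have hF := measurable_linRegCoords hmX hmW hmε
  have hlaw := exists_map_linRegCoords_eq_gaussianReal hσ.ne' hlawX hlawW hlawε
  have hpos : ∀ k, (Measure.map (linRegCoords X W ε k) ℙ).IsOpenPosMeasure := fun k =>
    (hlaw k).elim fun v hv => hv.2 ▸ isOpenPosMeasure_gaussianReal 0 hv.1
  have hmom : ∀ k, HasAllMoments (linRegCoords X W ε k) ℙ := fun k =>
    (hlaw k).elim fun v hv => hasAllMoments_of_map_eq_gaussianReal (hF k) hv.2
  have hnum : ∀ i, 0 < ∫ ω, What ω i ⬝ᵥ (X ω *ᵥ Y ω i) := fun i => by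
    simpa only [hWhat, mul_transpose_mul_row_dotProduct, inputsOf_linRegCoords,
      crossCorr_linRegCoords, ← hY] using
      integral_crossCorr_quadForm_pos hF hindep hpos hmom
        (continuous_inv_mul_transpose_add_smul_one hσ.ne')
        (fun X => (posDef_mul_transpose_add_smul_one X hσ.ne').inv)
        (dotProduct_inv_mul_transpose_add_smul_one_le · hσ.ne') hn i
  have hden : ∀ i, 0 < ∫ ω, Y ω i ⬝ᵥ (((X ω)ᵀ * X ω) *ᵥ Y ω i) := fun i => by
    simpa only [dotProduct_transpose_mul_mulVec, one_mulVec, crossCorr_linRegCoords, ← hY] using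
      integral_crossCorr_quadForm_pos hF hindep hpos hmom continuous_const
        (fun _ => PosDef.one) (C := 1) (fun _ u => by rw [one_mulVec, one_mul]) hn i
  have hlam_pos : ∀ i, 0 < lam i := fun i => hlam i ▸ div_pos (hnum i) (hden i)
  exact ⟨hnum, hden, hlam_pos,
    isUnit_diagonal.mpr (Pi.isUnit_iff.mpr fun i => (hlam_pos i).ne'.isUnit)⟩

/-- Assume `n > σ²`.  Then for every `i`,
`E[(Ŵ_D)_{i,:} X (Yᵀ)_{:,i}] > 0` and `E[Y_{i,:} Xᵀ X (Yᵀ)_{:,i}] > 0`; consequently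
`λ_i > 0` for all `i` and `Λ = diag(λ₁,…,λ_d)` is invertible. -/
theorem stmt_12 (d n : ℕ) (hd : 1 ≤ d) (hn : 1 ≤ n) (σ : ℝ) (hσ : 0 < σ)
    (Ω : Type) [MeasureSpace Ω] [IsProbabilityMeasure (ℙ : Measure Ω)]
    (X : Ω → Matrix (Fin d) (Fin n) ℝ)
    (W : Ω → Matrix (Fin d) (Fin d) ℝ)
    (ε : Ω → Matrix (Fin d) (Fin n) ℝ)
    (hmX : ∀ i j, Measurable fun ω => X ω i j)
    (hmW : ∀ i j, Measurable fun ω => W ω i j)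
    (hmε : ∀ i j, Measurable fun ω => ε ω i j)
    (hindep : iIndepFun
      (Sum.elim (fun q : Fin d × Fin n => fun ω => X ω q.1 q.2)
        (Sum.elim (fun q : Fin d × Fin d => fun ω => W ω q.1 q.2)
          (fun q : Fin d × Fin n => fun ω => ε ω q.1 q.2))) ℙ)
    (hlawX : ∀ i j, Measure.map (fun ω => X ω i j) ℙ = gaussianReal 0 1)
    (hlawW : ∀ i j, Measure.map (fun ω => W ω i j) ℙ = gaussianReal 0 1)
    (hlawε : ∀ i j, Measure.map (fun ω => ε ω i j) ℙ = gaussianReal 0 ⟨σ ^ 2, sq_nonneg σ⟩)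
    (Y : Ω → Matrix (Fin d) (Fin n) ℝ) (hY : ∀ ω, Y ω = W ω * X ω + ε ω)
    (What : Ω → Matrix (Fin d) (Fin d) ℝ)
    (hWhat : ∀ ω, What ω =
      Y ω * (X ω)ᵀ * (X ω * (X ω)ᵀ + σ ^ 2 • (1 : Matrix (Fin d) (Fin d) ℝ))⁻¹)
    (hnσ : σ ^ 2 < (n : ℝ))
    (lam : Fin d → ℝ)
    (hlam : ∀ i : Fin d, lam i =
      (∫ ω, What ω i ⬝ᵥ (X ω *ᵥ Y ω i)) / (∫ ω, Y ω i ⬝ᵥ (((X ω)ᵀ * X ω) *ᵥ Y ω i))) :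
    (∀ i : Fin d, 0 < ∫ ω, What ω i ⬝ᵥ (X ω *ᵥ Y ω i)) ∧
    (∀ i : Fin d, 0 < ∫ ω, Y ω i ⬝ᵥ (((X ω)ᵀ * X ω) *ᵥ Y ω i)) ∧
    (∀ i : Fin d, 0 < lam i) ∧
    IsUnit (Matrix.diagonal lam) :=
  stmt_12_general d n hn σ hσ Ω X W ε hmX hmW hmε hindep hlawX hlawW hlawε Y hY What hWhat lam hlam
end
end
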